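/- (Sauer–Shelah) Let (X,R) be a set system of VC dimension at most d. Then for every finite subset Y ⊆ X with Card(Y) = n, the number of distinct traces Card{Y ∩ R : R ∈ R} is at most Σ_{i=0}^{d} C(n,i), which for n ≥ d ≥ 1 is at most n^d + 1 (in particular O(n^d)). -/

import Mathlib

/-- `Y` is shattered by the family `R`: every subset of `Y` is a trace `Y ∩ r`. -/
def ShattersFam {X : Type*} (R : Set (Set X)) (Y : Set X) : Prop :=
  ∀ Z ⊆ Y, ∃ r ∈ R, Y ∩ r = Z

/-! Realise the traces on `Y` as a family `𝒜` of subsets of `Y`. A set shattered by `𝒜` is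
shattered by `R`, hence has at most `d` elements, and by Pajor's form of the Sauer–Shelah lemma
`#𝒜` is at most the number of sets `𝒜` shatters, i.e. at most the number of subsets of `Y` of
size `≤ d`. The bound `n ^ d + 1` follows by induction on `d` from
`C(n, d+1) (d+1) = C(n, d) (n-d) ≤ n^d (n-1)`. -/

open Finset

namespace Finset

variable {α : Type*} [DecidableEq α]

theorem card_le_sum_choose_of_shatters_card_le {𝒜 : Finset (Finset α)} {Y : Finset α} {d : ℕ}
    (h𝒜 : ∀ t ∈ 𝒜, t ⊆ Y) (hd : ∀ s, 𝒜.Shatters s → #s ≤ d) :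
    #𝒜 ≤ ∑ i ∈ range (d + 1), (#Y).choose i := by
  have hsub : 𝒜.shatterer ⊆ (range (d + 1)).biUnion (powersetCard · Y) := by
    intro s hs
    rw [mem_shatterer] at hs
    obtain ⟨t, ht, hst⟩ := hs.exists_superset
    simp only [mem_biUnion, mem_range, mem_powersetCard]
    exact ⟨#s, Nat.lt_succ_of_le (hd s hs), hst.trans (h𝒜 t ht), rfl⟩
  calc #𝒜 ≤ #𝒜.shatterer := card_le_card_shatterer 𝒜
    _ ≤ #((range (d + 1)).biUnion (powersetCard · Y)) := card_le_card hsub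
    _ ≤ ∑ i ∈ range (d + 1), #(powersetCard i Y) := card_biUnion_le
    _ = ∑ i ∈ range (d + 1), (#Y).choose i := by simp only [card_powersetCard]

end Finset

theorem Nat.sum_range_choose_le_pow_add_one {n d : ℕ} (hd : 1 ≤ d) (hdn : d ≤ n) :
    ∑ i ∈ range (d + 1), n.choose i ≤ n ^ d + 1 := by
  induction d, hd using Nat.le_induction with
  | base =>
    simp only [sum_range_succ, sum_range_zero, Nat.choose_zero_right, Nat.choose_one_right, pow_one]
    omega
  | succ d hd ih =>
    have hchoose : n.choose (d + 1) ≤ n ^ d * (n - 1) :=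
      calc n.choose (d + 1) ≤ n.choose (d + 1) * (d + 1) := Nat.le_mul_of_pos_right _ d.succ_pos
        _ = n.choose d * (n - d) := n.choose_succ_right_eq d
        _ ≤ n ^ d * (n - 1) := Nat.mul_le_mul (n.choose_le_pow d) (by omega)
    have hpow : n ^ d + n ^ d * (n - 1) = n ^ (d + 1) := by
      obtain ⟨k, rfl⟩ : ∃ k, n = k + 1 := ⟨n - 1, by omega⟩
      rw [Nat.add_sub_cancel, pow_succ]
      ring
    rw [sum_range_succ]
    have := ih (by omega)
    omega

section Traces

variable {X : Type*}

open Classical in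
noncomputable def traceFinset (R : Set (Set X)) (Y : Finset X) : Finset (Finset X) :=
  Y.powerset.filter fun s ↦ ∃ r ∈ R, (Y : Set X) ∩ r = s

theorem mem_traceFinset {R : Set (Set X)} {Y s : Finset X} :
    s ∈ traceFinset R Y ↔ ∃ r ∈ R, (Y : Set X) ∩ r = s := by
  classical
  simp only [traceFinset, mem_filter, mem_powerset, and_iff_right_iff_imp]
  rintro ⟨r, -, hr⟩
  exact coe_subset.1 (hr ▸ Set.inter_subset_left)

theorem subset_of_mem_traceFinset {R : Set (Set X)} {Y s : Finset X}
    (hs : s ∈ traceFinset R Y) : s ⊆ Y := by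
  classical exact mem_powerset.1 (mem_filter.1 hs).1

theorem ncard_traces_eq_card_traceFinset (R : Set (Set X)) (Y : Finset X) :
    {Z : Set X | ∃ r ∈ R, (Y : Set X) ∩ r = Z}.ncard = #(traceFinset R Y) := by
  have himage : {Z : Set X | ∃ r ∈ R, (Y : Set X) ∩ r = Z} =
      (↑) '' (traceFinset R Y : Set (Finset X)) := by
    ext Z
    simp only [Set.mem_ofPred_eq, Set.mem_image, mem_coe, mem_traceFinset]
    constructor
    · rintro ⟨r, hr, rfl⟩
      obtain ⟨s, hs⟩ := (Y.finite_toSet.subset Set.inter_subset_left :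
        ((Y : Set X) ∩ r).Finite).exists_finset_coe
      exact ⟨s, ⟨r, hr, hs.symm⟩, hs⟩
    · rintro ⟨s, ⟨r, hr, hrs⟩, rfl⟩
      exact ⟨r, hr, hrs⟩
  rw [himage, Set.ncard_image_of_injective _ coe_injective, Set.ncard_coe_finset]

theorem shattersFam_of_shatters_traceFinset [DecidableEq X] {R : Set (Set X)} {Y s : Finset X}
    (hs : (traceFinset R Y).Shatters s) : ShattersFam R s := by
  intro Z hZ
  obtain ⟨t, rfl⟩ := (s.finite_toSet.subset hZ).exists_finset_coe
  obtain ⟨u, hu, hsu⟩ := hs (coe_subset.1 hZ)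
  obtain ⟨r, hr, hru⟩ := mem_traceFinset.1 hu
  obtain ⟨v, hv, hsv⟩ := hs.exists_superset
  have hsY : (s : Set X) ⊆ Y := coe_subset.2 (hsv.trans (subset_of_mem_traceFinset hv))
  refine ⟨r, hr, ?_⟩
  rw [← Set.inter_eq_left.2 hsY, Set.inter_assoc, hru, ← coe_inter, hsu]

end Traces

/-- Sauer–Shelah: if no subset of cardinality `d+1` is shattered by `R`
(VC dimension at most `d`), then for every finite `Y` with `Card Y = n` the
number of traces `{Y ∩ r : r ∈ R}` is at most `Σ_{i=0}^{d} C(n,i)`, which for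
`n ≥ d ≥ 1` is at most `n^d + 1`. -/
theorem stmt6 {X : Type*} (R : Set (Set X)) (d : ℕ)
    (hVC : ∀ Y : Finset X, ShattersFam R (↑Y : Set X) → Y.card ≤ d)
    (Y : Finset X) (n : ℕ) (hn : Y.card = n) :
    {Z : Set X | ∃ r ∈ R, (↑Y : Set X) ∩ r = Z}.ncard
        ≤ ∑ i ∈ Finset.range (d + 1), Nat.choose n i ∧
      (1 ≤ d → d ≤ n →
        ∑ i ∈ Finset.range (d + 1), Nat.choose n i ≤ n ^ d + 1) := by
  classical
  refine ⟨?_, Nat.sum_range_choose_le_pow_add_one⟩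
  rw [ncard_traces_eq_card_traceFinset, ← hn]
  exact card_le_sum_choose_of_shatters_card_le (fun _ ↦ subset_of_mem_traceFinset)
    fun s hs ↦ hVC s (shattersFam_of_shatters_traceFinset hs)
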